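/- arXiv:math/0202125 — 4 statements merged into one kernel-verified Lean document; each statement's English description precedes it below -/
import Mathlib

section
/- Let m be an even positive integer, m ≤ n, and let c be an m-cycle in the symmetric group S_n. For any element x in the support of c, we have c = σ·τ, where σ = ∏_{i=1}^{m/2} (c^{1-i}(x), c^i(x)) is a product of m/2 disjoint transpositions and τ = ∏_{j=1}^{m/2-1} (c^j(x), c^{-j}(x)) is a product of m/2 - 1 disjoint transpositions. -/
open Equiv

private lemma aux_not_dvd {M d : ℤ} (h1 : -(2*M) < d) (h2 : d < 2*M)
    (h0 : d ≠ 0) (hp : d ≠ M) (hq : d ≠ -M) : ¬ M ∣ d := by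
  rintro ⟨q, rfl⟩
  have hM : 0 < M := by nlinarith
  have hq2 : q < 2 := by nlinarith
  have hq3 : -2 < q := by nlinarith
  interval_cases q <;> simp_all

private lemma aux_prod_fix {α : Type*} (l : List (Equiv.Perm α)) (y : α)
    (h : ∀ p ∈ l, p y = y) : l.prod y = y := by
  induction l with
  | nil => rfl
  | cons a l ih =>
    rw [List.prod_cons, Equiv.Perm.mul_apply,
      ih (fun p hp => h p (List.mem_cons_of_mem _ hp)), h a (by simp)]

private lemma aux_prod_range {α : Type*} (f : ℕ → Equiv.Perm α) (K t : ℕ) (ht : t < K) (y : α)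
    (h1 : ∀ s, s < K → s ≠ t → f s y = y)
    (h2 : ∀ s, s < K → s ≠ t → f s (f t y) = f t y) :
    ((List.range K).map f).prod y = f t y := by
  induction K with
  | zero => omega
  | succ K ih =>
    rw [List.range_succ, List.map_append, List.prod_append]
    simp only [List.map_cons, List.map_nil, List.prod_cons, List.prod_nil, mul_one]
    rw [Equiv.Perm.mul_apply]
    rcases eq_or_ne t K with rfl | hne
    · exact aux_prod_fix _ _ (fun p hp => by
        obtain ⟨s, hs, rfl⟩ := List.mem_map.mp hp
        have hs' : s < t := List.mem_range.mp hs
        exact h2 s (by omega) (by omega))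
    · rw [h1 K (by omega) (fun h => hne h.symm)]
      exact ih (by omega) (fun s hs hst => h1 s (by omega) hst)
        (fun s hs hst => h2 s (by omega) hst)

private lemma aux_swap_disjoint {α : Type*} [DecidableEq α] {a b u v : α}
    (h1 : a ≠ u) (h2 : a ≠ v) (h3 : b ≠ u) (h4 : b ≠ v) :
    Equiv.Perm.Disjoint (Equiv.swap a b) (Equiv.swap u v) := by
  intro z
  rcases eq_or_ne z a with rfl | hza
  · exact Or.inr (Equiv.swap_apply_of_ne_of_ne h1 h2)
  rcases eq_or_ne z b with rfl | hzb
  · exact Or.inr (Equiv.swap_apply_of_ne_of_ne h3 h4)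
  · exact Or.inl (Equiv.swap_apply_of_ne_of_ne hza hzb)

private lemma aux_flat {α β : Type*} (l : List α) (g : α → β) :
    l.flatMap (fun a => [g a]) = l.map g := by
  induction l with
  | nil => rfl
  | cons a l ih => simp [List.flatMap_cons, ih]

theorem stmt_0 (n m : ℕ) (hm : 0 < m) (hme : Even m) (hmn : m ≤ n)
    (c : Equiv.Perm (Fin n)) (hc : c.IsCycle) (hcard : c.support.card = m)
    (x : Fin n) (hx : x ∈ c.support) :
    c = ((List.range (m / 2)).map
          (fun i => Equiv.swap ((c ^ (1 - ((i : ℤ) + 1))) x) ((c ^ ((i : ℤ) + 1)) x))).prod *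
        ((List.range (m / 2 - 1)).map
          (fun j => Equiv.swap ((c ^ ((j : ℤ) + 1)) x) ((c ^ (-((j : ℤ) + 1))) x))).prod ∧
    ((List.range (m / 2)).map
      (fun i => Equiv.swap ((c ^ (1 - ((i : ℤ) + 1))) x) ((c ^ ((i : ℤ) + 1)) x))).Pairwise
        Equiv.Perm.Disjoint ∧
    ((List.range (m / 2 - 1)).map
      (fun j => Equiv.swap ((c ^ ((j : ℤ) + 1)) x) ((c ^ (-((j : ℤ) + 1))) x))).Pairwise
        Equiv.Perm.Disjoint := by
  obtain ⟨h, hhm⟩ := hme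
  have hmh : m = 2 * h := by omega
  have hh1 : 1 ≤ h := by omega
  have hdiv : m / 2 = h := by omega
  have hco : c.IsCycleOn (c.support : Set (Fin n)) := by
    rw [Equiv.Perm.coe_support_eq_set_support]; exact hc.isCycleOn
  have key : ∀ a b : ℤ, (c ^ a) x = (c ^ b) x ↔ (m : ℤ) ∣ (b - a) := fun a b => by
    rw [hco.zpow_apply_eq_zpow_apply hx, Int.modEq_iff_dvd, hcard]
  have hne : ∀ a b : ℤ, ¬ (m:ℤ) ∣ (b - a) → (c ^ a) x ≠ (c ^ b) x :=
    fun a b hd he => hd ((key a b).mp he)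
  have ND : ∀ d : ℤ, -(2*(m:ℤ)) < d → d < 2*(m:ℤ) → d ≠ 0 → d ≠ (m:ℤ) → d ≠ -(m:ℤ) →
      ¬ (m:ℤ) ∣ d := fun d a b e f g => aux_not_dvd a b e f g
  have hfx : ∀ a b e : ℤ, ¬ (m:ℤ) ∣ (a - e) → ¬ (m:ℤ) ∣ (b - e) →
      Equiv.swap ((c ^ a) x) ((c ^ b) x) ((c ^ e) x) = (c ^ e) x :=
    fun a b e h1 h2 => Equiv.swap_apply_of_ne_of_ne (hne e a h1) (hne e b h2)
  have hstep : ∀ a : ℤ, c ((c ^ a) x) = (c ^ (a + 1)) x := fun a => by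
    have : c ^ (a + 1) = c * c ^ a := by rw [add_comm, zpow_add, zpow_one]
    rw [this, Equiv.Perm.mul_apply]
  have hlist : ∀ (K : ℕ) (f : ℤ → Equiv.Perm (Fin n)),
      List.map f (do let a ← List.range K; pure ((a : ℕ) : ℤ)) =
        (List.range K).map (fun a : ℕ => f ((a : ℕ) : ℤ)) := by
    intro K f
    simp only [List.pure_def, List.bind_eq_flatMap, aux_flat, List.map_map]
    rfl
  refine ⟨?_, ?_, ?_⟩
  · rw [hdiv, hlist, hlist]
    beta_reduce
    refine Equiv.ext fun y => ?_
    by_cases hy : y ∈ c.support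
    · obtain ⟨i, hi⟩ := hc.sameCycle (Equiv.Perm.mem_support.mp hx) (Equiv.Perm.mem_support.mp hy)
      obtain ⟨k, hk0, hk1, hky⟩ : ∃ k : ℤ, 0 ≤ k ∧ k < (m:ℤ) ∧ (c ^ k) x = y := by
        refine ⟨i % (m:ℤ), Int.emod_nonneg i (by omega),
          Int.emod_lt_of_pos i (by exact_mod_cast hm), ?_⟩
        rw [← hi]
        refine (key _ i).mpr ⟨i / (m:ℤ), ?_⟩
        have := Int.emod_add_mul_ediv i (m:ℤ); linarith
      subst hky
      -- evaluate τ
      have TB : ((List.range (h - 1)).map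
          (fun j : ℕ => Equiv.swap ((c ^ ((j : ℤ) + 1)) x) ((c ^ (-((j : ℤ) + 1))) x))).prod
          ((c ^ k) x) = (c ^ (-k)) x := by
        have trich : (k = 0 ∨ k = (h:ℤ)) ∨ (1 ≤ k ∧ k ≤ (h:ℤ) - 1) ∨
            ((h:ℤ) + 1 ≤ k ∧ k ≤ 2*(h:ℤ) - 1) := by omega
        rcases trich with hk | hk | hk
        · rw [aux_prod_fix]
          · refine (key k (-k)).mpr ?_
            rcases hk with h0 | h0
            · exact ⟨0, by omega⟩
            · exact ⟨-1, by omega⟩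
          · intro p hp
            obtain ⟨s, hs, rfl⟩ := List.mem_map.mp hp
            have hs' : s < h - 1 := List.mem_range.mp hs
            exact hfx _ _ _ (ND _ (by omega) (by omega) (by omega) (by omega) (by omega))
              (ND _ (by omega) (by omega) (by omega) (by omega) (by omega))
        · obtain ⟨t, ht⟩ : ∃ t : ℕ, (t:ℤ) = k - 1 := ⟨(k-1).toNat, Int.toNat_of_nonneg (by omega)⟩
          have htlt : t < h - 1 := by omega
          have hft : Equiv.swap ((c ^ ((t : ℤ) + 1)) x) ((c ^ (-((t : ℤ) + 1))) x) ((c ^ k) x)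
              = (c ^ (-k)) x := by
            rw [show ((t:ℤ) + 1) = k by omega]
            exact Equiv.swap_apply_left _ _
          rw [aux_prod_range _ (h-1) t htlt _
            (fun s hs hst => hfx _ _ _
              (ND _ (by omega) (by omega) (by omega) (by omega) (by omega))
              (ND _ (by omega) (by omega) (by omega) (by omega) (by omega)))
            (fun s hs hst => by
              rw [hft]
              exact hfx _ _ _
                (ND _ (by omega) (by omega) (by omega) (by omega) (by omega))
                (ND _ (by omega) (by omega) (by omega) (by omega) (by omega)))]
          exact hft
        · obtain ⟨t, ht⟩ : ∃ t : ℕ, (t:ℤ) = 2*(h:ℤ) - k - 1 :=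
            ⟨(2*(h:ℤ) - k - 1).toNat, Int.toNat_of_nonneg (by omega)⟩
          have htlt : t < h - 1 := by omega
          have hft : Equiv.swap ((c ^ ((t : ℤ) + 1)) x) ((c ^ (-((t : ℤ) + 1))) x) ((c ^ k) x)
              = (c ^ (-k)) x := by
            rw [show (c ^ k) x = (c ^ (-((t:ℤ) + 1))) x from (key _ _).mpr ⟨-1, by omega⟩,
              Equiv.swap_apply_right]
            exact (key _ _).mpr ⟨-1, by omega⟩
          rw [aux_prod_range _ (h-1) t htlt _
            (fun s hs hst => hfx _ _ _
              (ND _ (by omega) (by omega) (by omega) (by omega) (by omega))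
              (ND _ (by omega) (by omega) (by omega) (by omega) (by omega)))
            (fun s hs hst => by
              rw [hft]
              exact hfx _ _ _
                (ND _ (by omega) (by omega) (by omega) (by omega) (by omega))
                (ND _ (by omega) (by omega) (by omega) (by omega) (by omega)))]
          exact hft
      -- evaluate σ
      have TA : ((List.range h).map
          (fun i : ℕ => Equiv.swap ((c ^ (1 - ((i : ℤ) + 1))) x) ((c ^ ((i : ℤ) + 1)) x))).prod
          ((c ^ (-k)) x) = (c ^ (k + 1)) x := by
        have trich : (0 ≤ k ∧ k ≤ (h:ℤ) - 1) ∨ ((h:ℤ) ≤ k ∧ k ≤ 2*(h:ℤ) - 1) := by omega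
        rcases trich with hk | hk
        · obtain ⟨t, ht⟩ : ∃ t : ℕ, (t:ℤ) = k := ⟨k.toNat, Int.toNat_of_nonneg (by omega)⟩
          have htlt : t < h := by omega
          have hft : Equiv.swap ((c ^ (1 - ((t : ℤ) + 1))) x) ((c ^ ((t : ℤ) + 1)) x)
              ((c ^ (-k)) x) = (c ^ (k + 1)) x := by
            rw [show (1 - ((t:ℤ) + 1)) = -k by omega, show ((t:ℤ) + 1) = k + 1 by omega]
            exact Equiv.swap_apply_left _ _
          rw [aux_prod_range _ h t htlt _
            (fun s hs hst => hfx _ _ _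
              (ND _ (by omega) (by omega) (by omega) (by omega) (by omega))
              (ND _ (by omega) (by omega) (by omega) (by omega) (by omega)))
            (fun s hs hst => by
              rw [hft]
              exact hfx _ _ _
                (ND _ (by omega) (by omega) (by omega) (by omega) (by omega))
                (ND _ (by omega) (by omega) (by omega) (by omega) (by omega)))]
          exact hft
        · obtain ⟨t, ht⟩ : ∃ t : ℕ, (t:ℤ) = 2*(h:ℤ) - k - 1 :=
            ⟨(2*(h:ℤ) - k - 1).toNat, Int.toNat_of_nonneg (by omega)⟩
          have htlt : t < h := by omega
          have hft : Equiv.swap ((c ^ (1 - ((t : ℤ) + 1))) x) ((c ^ ((t : ℤ) + 1)) x)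
              ((c ^ (-k)) x) = (c ^ (k + 1)) x := by
            rw [show (c ^ (-k)) x = (c ^ ((t:ℤ) + 1)) x from (key _ _).mpr ⟨1, by omega⟩,
              Equiv.swap_apply_right]
            exact (key _ _).mpr ⟨1, by omega⟩
          rw [aux_prod_range _ h t htlt _
            (fun s hs hst => by
              refine hfx _ _ _ ?_ ?_
              · rw [show -k = 2*(h:ℤ) - k - 2*(h:ℤ) by ring] at *
                exact (ND _ (by omega) (by omega) (by omega) (by omega) (by omega))
              · exact (ND _ (by omega) (by omega) (by omega) (by omega) (by omega)))
            (fun s hs hst => by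
              rw [hft]
              exact hfx _ _ _
                (ND _ (by omega) (by omega) (by omega) (by omega) (by omega))
                (ND _ (by omega) (by omega) (by omega) (by omega) (by omega)))]
          exact hft
      rw [Equiv.Perm.mul_apply, TB, TA, hstep]
    · have hmem : ∀ a : ℤ, (c ^ a) x ∈ c.support := fun a =>
        Equiv.Perm.zpow_apply_mem_support.mpr hx
      rw [Equiv.Perm.mul_apply,
        aux_prod_fix _ y (fun p hp => by
          obtain ⟨s, hs, rfl⟩ := List.mem_map.mp hp
          exact Equiv.swap_apply_of_ne_of_ne (fun H => hy (by rw [H]; exact hmem _))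
            (fun H => hy (by rw [H]; exact hmem _))),
        aux_prod_fix _ y (fun p hp => by
          obtain ⟨s, hs, rfl⟩ := List.mem_map.mp hp
          exact Equiv.swap_apply_of_ne_of_ne (fun H => hy (by rw [H]; exact hmem _))
            (fun H => hy (by rw [H]; exact hmem _))),
        Equiv.Perm.notMem_support.mp hy]
  · rw [hdiv, hlist, List.pairwise_iff_getElem]
    intro i j hi hj hij
    simp only [List.getElem_map, List.getElem_range]
    simp only [List.length_map, List.length_range] at hi hj
    exact aux_swap_disjoint
      (hne _ _ (ND _ (by omega) (by omega) (by omega) (by omega) (by omega)))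
      (hne _ _ (ND _ (by omega) (by omega) (by omega) (by omega) (by omega)))
      (hne _ _ (ND _ (by omega) (by omega) (by omega) (by omega) (by omega)))
      (hne _ _ (ND _ (by omega) (by omega) (by omega) (by omega) (by omega)))
  · rw [hdiv, hlist, List.pairwise_iff_getElem]
    intro i j hi hj hij
    simp only [List.getElem_map, List.getElem_range]
    simp only [List.length_map, List.length_range] at hi hj
    exact aux_swap_disjoint
      (hne _ _ (ND _ (by omega) (by omega) (by omega) (by omega) (by omega)))
      (hne _ _ (ND _ (by omega) (by omega) (by omega) (by omega) (by omega)))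
      (hne _ _ (ND _ (by omega) (by omega) (by omega) (by omega) (by omega)))
      (hne _ _ (ND _ (by omega) (by omega) (by omega) (by omega) (by omega)))
end

section
/- Let m be an even positive integer and c an m-cycle in S_n. The decompositions c = σ·τ (with σ a product of m/2 disjoint transpositions and τ a product of m/2 - 1 disjoint transpositions, both supported in the support of c) are in bijection with the orbits {x, c^{m/2}(x)} of the involution c^{m/2} on the support of c. -/
/-- `IsProdOfDisjointTranspositions π k` : `π` is a product of `k` pairwise disjoint
transpositions. -/
def IsProdOfDisjointTranspositions {n : ℕ} (π : Equiv.Perm (Fin n)) (k : ℕ) : Prop :=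
  ∃ l : List (Equiv.Perm (Fin n)),
    (∀ t ∈ l, t.IsSwap) ∧ l.Pairwise Equiv.Perm.Disjoint ∧ l.length = k ∧ π = l.prod

/-! If `c = σ * τ` with `σ` and `τ` involutions, then `τ` conjugates `c` to `c⁻¹`, so on the
support of `c` it acts as a reflection of an `m`-gon: once it fixes a point `x`, it sends
`c ^ k x` to `c ^ (-k) x`. For `m` even its fixed points in the support are then exactly `x` and
`c ^ (m / 2) x`, so a factorization is determined by the pair of points that `τ` fixes.
Conversely the reflection through any `x` is an involution fixing exactly that pair, and
`σ = c * τ`, which sends `c ^ k x` to `c ^ (1 - k) x`, is a fixed-point-free involution on the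
support because `1 - k ≡ k` has no solution modulo an even `m`. Throughout, a product of `k`
disjoint transpositions is the same as an involution moving `2 * k` points. -/

open Equiv Equiv.Perm Finset

theorem Equiv.Perm.cycleType_eq_replicate_two_iff {α : Type*} [Fintype α] [DecidableEq α]
    {π : Perm α} {k : ℕ} :
    π.cycleType = Multiset.replicate k 2 ↔ π ^ 2 = 1 ∧ #π.support = 2 * k := by
  constructor
  · intro h
    refine ⟨pow_prime_eq_one_iff.2 fun a ha => ?_, ?_⟩
    · rw [h] at ha
      exact Multiset.eq_of_mem_replicate ha
    · rw [← sum_cycleType, h, Multiset.sum_replicate, smul_eq_mul, mul_comm]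
  · rintro ⟨hsq, hcard⟩
    have h := cycleType_of_pow_prime_eq_one hsq
    have hk : Multiset.card π.cycleType = k := by
      have := sum_cycleType π
      rw [h, Multiset.sum_replicate, smul_eq_mul] at this
      omega
    rwa [hk] at h

theorem isProdOfDisjointTranspositions_iff {n k : ℕ} {π : Perm (Fin n)} :
    IsProdOfDisjointTranspositions π k ↔ π ^ 2 = 1 ∧ #π.support = 2 * k := by
  rw [← cycleType_eq_replicate_two_iff]
  constructor
  · rintro ⟨l, hswap, hdisj, rfl, rfl⟩
    rw [cycleType_eq l rfl (fun t ht => (hswap t ht).isCycle) hdisj, ← Multiset.coe_replicate,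
      Multiset.coe_eq_coe, List.map_eq_replicate_iff.2 ?_]
    exact fun t ht => card_support_eq_two.2 (hswap t ht)
  · intro h
    obtain ⟨l, hprod, hcyc, hdisj⟩ := π.cycleFactors
    obtain ⟨hlen, htwo⟩ :=
      Multiset.eq_replicate.1 ((cycleType_eq l hprod hcyc hdisj).symm.trans h)
    refine ⟨l, fun t ht => card_support_eq_two.1 ?_, hdisj, by simpa using hlen, hprod.symm⟩
    exact htwo _ (Multiset.mem_coe.2 (List.mem_map_of_mem ht))

theorem Int.neg_modEq_self_iff {m : ℕ} (hm : Even m) {k : ℤ} :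
    -k ≡ k [ZMOD m] ↔ k ≡ 0 [ZMOD m] ∨ k ≡ (m / 2 : ℕ) [ZMOD m] := by
  obtain ⟨h, rfl⟩ := hm
  rw [show (h + h) / 2 = h by omega]
  simp only [Int.modEq_iff_dvd]
  push_cast
  rw [show k - -k = 2 * k by ring, show (h : ℤ) + h = 2 * h by ring,
    mul_dvd_mul_iff_left two_ne_zero]
  constructor
  · rintro ⟨q, rfl⟩
    rcases Int.even_or_odd q with ⟨r, rfl⟩ | ⟨r, rfl⟩
    · exact Or.inl ⟨-r, by ring⟩
    · exact Or.inr ⟨-r, by ring⟩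
  · rintro (hd | hd)
    · exact (dvd_neg.2 ((dvd_mul_left _ _).trans hd)).trans (by simp)
    · exact dvd_sub_self_left.1 ((dvd_mul_left (h : ℤ) 2).trans hd)

theorem Int.not_one_sub_modEq_self {m : ℕ} (hm : Even m) (k : ℤ) : ¬ 1 - k ≡ k [ZMOD m] := by
  intro hk
  have h2 : (2 : ℤ) ∣ k - (1 - k) := (Int.natCast_dvd_natCast.2 (even_iff_two_dvd.1 hm)).trans
    (Int.modEq_iff_dvd.1 hk)
  omega

theorem conj_eq_inv_of_eq_mul {G : Type*} [Group G] {c σ τ : G} (h : c = σ * τ)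
    (hσ : σ ^ 2 = 1) (hτ : τ ^ 2 = 1) : τ * c * τ⁻¹ = c⁻¹ := by
  have hσ' : σ⁻¹ = σ := inv_eq_of_mul_eq_one_right (sq σ ▸ hσ)
  have hτ' : τ⁻¹ = τ := inv_eq_of_mul_eq_one_right (sq τ ▸ hτ)
  rw [h, mul_inv_rev, hσ', hτ', mul_assoc, mul_assoc, ← sq, hτ, mul_one]

theorem mul_sq_eq_one_of_conj_eq_inv {G : Type*} [Group G] {c τ : G}
    (h : τ * c * τ⁻¹ = c⁻¹) (hτ : τ ^ 2 = 1) : (c * τ) ^ 2 = 1 := by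
  calc (c * τ) ^ 2 = c * (τ * c * τ⁻¹) := by
        rw [inv_eq_of_mul_eq_one_right (sq τ ▸ hτ), sq]; group
    _ = 1 := by rw [h, mul_inv_cancel]

namespace Equiv.Perm

theorem zpow_apply_of_conj_eq_inv {α : Type*} {c τ : Perm α} {x : α}
    (h : τ * c * τ⁻¹ = c⁻¹) (hx : τ x = x) (k : ℤ) : τ ((c ^ k) x) = (c ^ (-k)) x := by
  have hk : τ * c ^ k * τ⁻¹ = c ^ (-k) := by rw [← conj_zpow, h, zpow_neg, inv_zpow]
  rw [← hk, mul_apply, mul_apply, inv_eq_iff_eq.2 hx.symm]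

theorem apply_zpow_apply {α : Type*} (c : Perm α) (x : α) (k : ℤ) :
    c ((c ^ k) x) = (c ^ (1 + k)) x := by
  rw [zpow_one_add, mul_apply]

theorem inv_apply_zpow_apply {α : Type*} (c : Perm α) (x : α) (k : ℤ) :
    c⁻¹ ((c ^ k) x) = (c ^ (-1 + k)) x := by
  rw [zpow_add, zpow_neg_one, mul_apply]

namespace IsCycle

variable {α : Type*} [Fintype α] [DecidableEq α] {c τ : Perm α} {x : α}

theorem isCycleOn_support (hc : c.IsCycle) : c.IsCycleOn c.support :=
  coe_support_eq_set_support c ▸ hc.isCycleOn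

theorem zpow_apply_eq_zpow_apply (hc : c.IsCycle) (hx : x ∈ c.support) {i j : ℤ} :
    (c ^ i) x = (c ^ j) x ↔ i ≡ j [ZMOD #c.support] :=
  hc.isCycleOn_support.zpow_apply_eq_zpow_apply hx

theorem pow_half_card_apply_ne (hc : c.IsCycle) (hx : x ∈ c.support) :
    (c ^ (#c.support / 2)) x ≠ x := by
  rw [Ne, hc.isCycleOn_support.pow_apply_eq hx]
  have := hc.two_le_card_support
  exact fun h => absurd (Nat.eq_zero_of_dvd_of_lt h (by omega)) (by omega)

theorem exists_mem_support_apply_eq (hc : c.IsCycle) (hsub : τ.support ⊆ c.support)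
    (hcard : #τ.support = #c.support - 2) : ∃ x ∈ c.support, τ x = x := by
  have := hc.two_le_card_support
  obtain ⟨x, hx⟩ : (c.support \ τ.support).Nonempty := by
    rw [← card_pos, card_sdiff_of_subset hsub]
    omega
  exact ⟨x, (mem_sdiff.1 hx).1, notMem_support.1 (mem_sdiff.1 hx).2⟩

theorem eq_of_conj_eq_inv (hc : c.IsCycle) (hx : x ∈ c.support) {τ₁ τ₂ : Perm α}
    (h₁ : τ₁ * c * τ₁⁻¹ = c⁻¹) (h₂ : τ₂ * c * τ₂⁻¹ = c⁻¹) (hx₁ : τ₁ x = x) (hx₂ : τ₂ x = x)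
    (hs₁ : τ₁.support ⊆ c.support) (hs₂ : τ₂.support ⊆ c.support) : τ₁ = τ₂ := by
  ext y
  by_cases hy : y ∈ c.support
  · obtain ⟨k, rfl⟩ := hc.exists_zpow_eq (mem_support.1 hx) (mem_support.1 hy)
    rw [zpow_apply_of_conj_eq_inv h₁ hx₁, zpow_apply_of_conj_eq_inv h₂ hx₂]
  · rw [notMem_support.1 fun h => hy (hs₁ h), notMem_support.1 fun h => hy (hs₂ h)]

theorem sdiff_support_eq_pair (hc : c.IsCycle) (hm : Even #c.support)
    (h : τ * c * τ⁻¹ = c⁻¹) (hx : x ∈ c.support) (hτx : τ x = x) :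
    c.support \ τ.support = {x, (c ^ (#c.support / 2)) x} := by
  ext y
  simp only [mem_sdiff, notMem_support, mem_insert, mem_singleton]
  by_cases hy : y ∈ c.support
  · obtain ⟨k, rfl⟩ := hc.exists_zpow_eq (mem_support.1 hx) (mem_support.1 hy)
    have hx0 := hc.zpow_apply_eq_zpow_apply hx (i := k) (j := 0)
    have hxm := hc.zpow_apply_eq_zpow_apply hx (i := k) (j := (#c.support / 2 : ℕ))
    rw [zpow_zero, one_apply] at hx0
    rw [zpow_natCast] at hxm
    rw [zpow_apply_of_conj_eq_inv h hτx, hc.zpow_apply_eq_zpow_apply hx, hx0, hxm]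
    exact and_iff_right hy |>.trans (Int.neg_modEq_self_iff hm)
  · refine iff_of_false (fun h => hy h.1) ?_
    rintro (rfl | rfl)
    exacts [hy hx, hy (pow_apply_mem_support.2 hx)]

noncomputable def reflectionFun (hc : c.IsCycle) (hx : x ∈ c.support) (y : α) : α :=
  if hy : y ∈ c.support then
    (c ^ (-(hc.exists_zpow_eq (mem_support.1 hx) (mem_support.1 hy)).choose)) x
  else y

theorem reflectionFun_zpow_apply (hc : c.IsCycle) (hx : x ∈ c.support) (k : ℤ) :
    reflectionFun hc hx ((c ^ k) x) = (c ^ (-k)) x := by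
  have hy : (c ^ k) x ∈ c.support := zpow_apply_mem_support.2 hx
  rw [reflectionFun, dif_pos hy]
  have hk := (hc.exists_zpow_eq (mem_support.1 hx) (mem_support.1 hy)).choose_spec
  rw [hc.zpow_apply_eq_zpow_apply hx] at hk ⊢
  exact hk.neg

theorem reflectionFun_involutive (hc : c.IsCycle) (hx : x ∈ c.support) :
    Function.Involutive (reflectionFun hc hx) := by
  intro y
  by_cases hy : y ∈ c.support
  · obtain ⟨k, rfl⟩ := hc.exists_zpow_eq (mem_support.1 hx) (mem_support.1 hy)
    rw [reflectionFun_zpow_apply, reflectionFun_zpow_apply, neg_neg]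
  · have hfix : reflectionFun hc hx y = y := dif_neg hy
    rw [hfix, hfix]

noncomputable def reflection (hc : c.IsCycle) (hx : x ∈ c.support) : Perm α :=
  (reflectionFun_involutive hc hx).toPerm

section reflection

variable (hc : c.IsCycle) (hx : x ∈ c.support)

theorem reflection_zpow_apply (k : ℤ) : hc.reflection hx ((c ^ k) x) = (c ^ (-k)) x :=
  reflectionFun_zpow_apply hc hx k

theorem reflection_apply_self : hc.reflection hx x = x := by
  simpa using hc.reflection_zpow_apply hx 0

theorem reflection_apply_of_notMem {y : α} (hy : y ∉ c.support) : hc.reflection hx y = y :=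
  dif_neg hy

theorem support_reflection_subset : (hc.reflection hx).support ⊆ c.support := fun y hy => by
  by_contra hn
  exact mem_support.1 hy (hc.reflection_apply_of_notMem hx hn)

theorem reflection_sq : hc.reflection hx ^ 2 = 1 := by
  ext y
  rw [sq, mul_apply, one_apply]
  exact reflectionFun_involutive hc hx y

theorem reflection_inv : (hc.reflection hx)⁻¹ = hc.reflection hx :=
  inv_eq_of_mul_eq_one_right (sq (hc.reflection hx) ▸ hc.reflection_sq hx)

theorem reflection_conj : hc.reflection hx * c * (hc.reflection hx)⁻¹ = c⁻¹ := by
  rw [reflection_inv]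
  ext y
  by_cases hy : y ∈ c.support
  · obtain ⟨k, rfl⟩ := hc.exists_zpow_eq (mem_support.1 hx) (mem_support.1 hy)
    simp only [mul_apply, reflection_zpow_apply, apply_zpow_apply, inv_apply_zpow_apply]
    rw [neg_add, neg_neg]
  · have hcy := notMem_support.1 hy
    rw [mul_apply, mul_apply, hc.reflection_apply_of_notMem hx hy, hcy,
      hc.reflection_apply_of_notMem hx hy, inv_eq_iff_eq.2 hcy.symm]

theorem sdiff_support_reflection (hm : Even #c.support) :
    c.support \ (hc.reflection hx).support = {x, (c ^ (#c.support / 2)) x} :=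
  hc.sdiff_support_eq_pair hm (hc.reflection_conj hx) hx (hc.reflection_apply_self hx)

theorem card_support_reflection (hm : Even #c.support) :
    #(hc.reflection hx).support = #c.support - 2 := by
  have h := card_sdiff_of_subset (hc.support_reflection_subset hx)
  rw [hc.sdiff_support_reflection hx hm, card_pair (hc.pow_half_card_apply_ne hx).symm] at h
  have := card_le_card (hc.support_reflection_subset hx)
  omega

theorem support_mul_reflection (hm : Even #c.support) :
    (c * hc.reflection hx).support = c.support := by
  ext y
  by_cases hy : y ∈ c.support
  · obtain ⟨k, rfl⟩ := hc.exists_zpow_eq (mem_support.1 hx) (mem_support.1 hy)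
    rw [mem_support, mul_apply, reflection_zpow_apply, apply_zpow_apply, Ne,
      hc.zpow_apply_eq_zpow_apply hx, ← sub_eq_add_neg]
    exact iff_of_true (Int.not_one_sub_modEq_self hm k) hy
  · refine iff_of_false ?_ hy
    rw [notMem_support, mul_apply, hc.reflection_apply_of_notMem hx hy, notMem_support.1 hy]

end reflection

end IsCycle

variable {α : Type*} [Fintype α] [DecidableEq α] {c : Perm α} {p q : Perm α × Perm α}

def IsInvolutionFactorization (c : Perm α) (p : Perm α × Perm α) : Prop :=
  c = p.1 * p.2 ∧ (p.1 ^ 2 = 1 ∧ #p.1.support = #c.support) ∧ p.1.support ⊆ c.support ∧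
    (p.2 ^ 2 = 1 ∧ #p.2.support = #c.support - 2) ∧ p.2.support ⊆ c.support

namespace IsInvolutionFactorization

theorem conj_eq_inv (h : IsInvolutionFactorization c p) : p.2 * c * p.2⁻¹ = c⁻¹ :=
  conj_eq_inv_of_eq_mul h.1 h.2.1.1 h.2.2.2.1.1

theorem exists_mem_support_apply_eq (hc : c.IsCycle) (h : IsInvolutionFactorization c p) :
    ∃ x ∈ c.support, p.2 x = x :=
  hc.exists_mem_support_apply_eq h.2.2.2.2 h.2.2.2.1.2

theorem sdiff_support_eq_pair (hc : c.IsCycle) (hm : Even #c.support)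
    (h : IsInvolutionFactorization c p) :
    ∃ x ∈ c.support, c.support \ p.2.support = {x, (c ^ (#c.support / 2)) x} := by
  obtain ⟨x, hx, hpx⟩ := h.exists_mem_support_apply_eq hc
  exact ⟨x, hx, hc.sdiff_support_eq_pair hm h.conj_eq_inv hx hpx⟩

theorem eq_of_sdiff_support_eq (hc : c.IsCycle) (hp : IsInvolutionFactorization c p)
    (hq : IsInvolutionFactorization c q) (h : c.support \ p.2.support = c.support \ q.2.support) :
    p = q := by
  obtain ⟨x, hx, hpx⟩ := hp.exists_mem_support_apply_eq hc
  have hqx : q.2 x = x := by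
    have hx' : x ∈ c.support \ q.2.support := h ▸ mem_sdiff.2 ⟨hx, notMem_support.2 hpx⟩
    exact notMem_support.1 (mem_sdiff.1 hx').2
  have h₂ : p.2 = q.2 :=
    hc.eq_of_conj_eq_inv hx hp.conj_eq_inv hq.conj_eq_inv hpx hqx hp.2.2.2.2 hq.2.2.2.2
  exact Prod.ext (mul_right_cancel (h₂ ▸ hp.1.symm.trans hq.1)) h₂

end IsInvolutionFactorization

theorem IsCycle.isInvolutionFactorization_reflection (hc : c.IsCycle) (hm : Even #c.support)
    {x : α} (hx : x ∈ c.support) :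
    IsInvolutionFactorization c (c * hc.reflection hx, hc.reflection hx) := by
  have hsupp := hc.support_mul_reflection hx hm
  refine ⟨?_, ⟨?_, by rw [hsupp]⟩, hsupp.subset, ⟨hc.reflection_sq hx,
    hc.card_support_reflection hx hm⟩, hc.support_reflection_subset hx⟩
  · rw [mul_assoc, ← sq, hc.reflection_sq hx, mul_one]
  · exact mul_sq_eq_one_of_conj_eq_inv (hc.reflection_conj hx) (hc.reflection_sq hx)

noncomputable def IsCycle.involutionFactorizationEquiv (hc : c.IsCycle) (hm : Even #c.support) :
    {p // IsInvolutionFactorization c p} ≃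
      {s : Finset α // ∃ x ∈ c.support, s = {x, (c ^ (#c.support / 2)) x}} :=
  Equiv.ofBijective (fun p => ⟨c.support \ p.1.2.support, p.2.sdiff_support_eq_pair hc hm⟩)
    ⟨fun p q h => Subtype.ext (p.2.eq_of_sdiff_support_eq hc q.2 (congrArg Subtype.val h)),
      by
        rintro ⟨s, x, hx, rfl⟩
        exact ⟨⟨_, hc.isInvolutionFactorization_reflection hm hx⟩,
          Subtype.ext (hc.sdiff_support_reflection hx hm)⟩⟩

end Equiv.Perm

theorem stmt_2_general (n m : ℕ) (hme : Even m)
    (c : Equiv.Perm (Fin n)) (hc : c.IsCycle) (hcard : c.support.card = m) :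
    Nonempty
      ({p : Equiv.Perm (Fin n) × Equiv.Perm (Fin n) //
          c = p.1 * p.2 ∧
          IsProdOfDisjointTranspositions p.1 (m / 2) ∧ p.1.support ⊆ c.support ∧
          IsProdOfDisjointTranspositions p.2 (m / 2 - 1) ∧ p.2.support ⊆ c.support} ≃
        {s : Finset (Fin n) // ∃ x ∈ c.support, s = {x, (c ^ (m / 2)) x}}) := by
  subst hcard
  have h₁ : 2 * (#c.support / 2) = #c.support := Nat.two_mul_div_two_of_even hme
  have h₂ : 2 * (#c.support / 2 - 1) = #c.support - 2 := by omega
  refine ⟨(Equiv.subtypeEquivRight fun p => ?_).trans (hc.involutionFactorizationEquiv hme)⟩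
  simp only [isProdOfDisjointTranspositions_iff, h₁, h₂, IsInvolutionFactorization]

theorem stmt_2 (n m : ℕ) (hm : 0 < m) (hme : Even m) (hmn : m ≤ n)
    (c : Equiv.Perm (Fin n)) (hc : c.IsCycle) (hcard : c.support.card = m) :
    Nonempty
      ({p : Equiv.Perm (Fin n) × Equiv.Perm (Fin n) //
          c = p.1 * p.2 ∧
          IsProdOfDisjointTranspositions p.1 (m / 2) ∧ p.1.support ⊆ c.support ∧
          IsProdOfDisjointTranspositions p.2 (m / 2 - 1) ∧ p.2.support ⊆ c.support} ≃
        {s : Finset (Fin n) // ∃ x ∈ c.support, s = {x, (c ^ (m / 2)) x}}) :=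
  stmt_2_general n m hme c hc hcard
end

section
/- Let n ≥ 6 be even and define σ₁ = (1,2,...,n-2), σ₂ = (n-2,n-1,n), σ₄ = [∏_{i=1}^{n/2-1}(i, n-i-1)]·(n-1,n), and σ₃ = [∏_{i=1}^{n/2-2}(i, n-i-2)]·(n-2,n) (fixing n/2 - 1 and n-1). Then σ₁σ₂σ₃σ₄ = 1 in S_n. -/
/-!
The product `σ₁σ₂` splices `n - 1, n` into the cycle `(1 … n-2)` and is the `n`-cycle `(1 … n)`.
The big products in `σ₃` and `σ₄` are the reflections `x ↦ n - 2 - x` of `[1, n - 3]` and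
`x ↦ n - 1 - x` of `[1, n - 2]`; their composite is the shift `x ↦ x - 1`, and the transpositions
`(n-2, n)`, `(n-1, n)` extend it to the inverse of `(1 … n)`.
-/

open Equiv

theorem List.formPerm_range'_one_apply {L : ℕ} (hL : 1 ≤ L) (x : ℕ) :
    (List.range' 1 L).formPerm x = if 1 ≤ x ∧ x < L then x + 1 else if x = L then 1 else x := by
  by_cases hx : 1 ≤ x ∧ x ≤ L
  · obtain ⟨i, rfl⟩ : ∃ i, x = i + 1 := ⟨x - 1, by omega⟩
    have key := List.formPerm_apply_getElem _ (List.nodup_range' (s := 1) (n := L)) i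
      (by rw [List.length_range']; omega)
    simp only [List.getElem_range', List.length_range', one_mul] at key
    rw [Nat.add_comm i 1, key]
    rcases Nat.lt_or_ge (i + 1) L with h | h
    · rw [Nat.mod_eq_of_lt h]
      split_ifs <;> omega
    · rw [show i + 1 = L by omega, Nat.mod_self]
      split_ifs <;> omega
  · rw [List.formPerm_apply_of_notMem (by rw [List.mem_range']; omega)]
    split_ifs <;> omega

theorem List.formPerm_triple_apply {α : Type*} [DecidableEq α] {a b c : α}
    (hab : a ≠ b) (hbc : b ≠ c) (hac : a ≠ c) (x : α) :
    [a, b, c].formPerm x = if x = a then b else if x = b then c else if x = c then a else x := by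
  rw [List.formPerm_cons_cons, List.formPerm_pair, Perm.mul_apply, swap_apply_def, swap_apply_def]
  split_ifs <;> subst_vars <;> simp_all

theorem List.formPerm_range'_one_mul_formPerm_triple {L : ℕ} (hL : 1 ≤ L) :
    (List.range' 1 L).formPerm * [L, L + 1, L + 2].formPerm = (List.range' 1 (L + 2)).formPerm := by
  ext x
  rw [Perm.mul_apply, List.formPerm_triple_apply (by omega) (by omega) (by omega),
    List.formPerm_range'_one_apply hL, List.formPerm_range'_one_apply (by omega)]
  split_ifs <;> omega

abbrev reflection (k r : ℕ) : Perm ℕ :=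
  ((List.range r).map fun i => swap (i + 1) (k - (i + 1))).prod

theorem reflection_apply {k r : ℕ} (hr : 2 * r < k) (x : ℕ) :
    reflection k r x = if (1 ≤ x ∧ x ≤ r) ∨ (k - r ≤ x ∧ x < k) then k - x else x := by
  induction r generalizing x with
  | zero =>
    rw [reflection, List.range_zero, List.map_nil, List.prod_nil, Perm.one_apply]
    split_ifs <;> omega
  | succ r ih =>
    rw [reflection, List.range_succ, List.map_append, List.prod_append, List.map_singleton,
      List.prod_singleton, Perm.mul_apply, swap_apply_def]
    split_ifs <;> rw [ih (by omega)] <;> split_ifs <;> omega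

-- When `k ≤ 2r + 2` the only point of `[1, k - 1]` left out is the midpoint, fixed by `x ↦ k - x`.
theorem reflection_apply_of_le {k r : ℕ} (hr : 2 * r < k) (hk : k ≤ 2 * r + 2) (x : ℕ) :
    reflection k r x = if 1 ≤ x ∧ x < k then k - x else x := by
  rw [reflection_apply hr]
  split_ifs <;> omega

theorem reflection_mul_swap_mul_reflection_mul_swap {k r s : ℕ} (hr : 2 * r < k)
    (hk : k ≤ 2 * r + 2) (hs : 2 * s < k + 1) (hk' : k + 1 ≤ 2 * s + 2) :
    reflection k r * swap k (k + 2) * (reflection (k + 1) s * swap (k + 1) (k + 2))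
      = (List.range' 1 (k + 2)).formPerm⁻¹ := by
  refine eq_inv_of_mul_eq_one_right (Perm.ext fun x => ?_)
  simp only [Perm.mul_apply, Perm.one_apply]
  generalize hy : reflection (k + 1) s (swap (k + 1) (k + 2) x) = y
  rw [swap_apply_def, reflection_apply_of_le hs hk'] at hy
  rw [swap_apply_def, reflection_apply_of_le hr hk, List.formPerm_range'_one_apply (by omega)]
  split_ifs at hy ⊢ <;> omega

theorem stmt_11 (n : ℕ) (hn : 6 ≤ n) (hne : Even n)
    (σ₁ σ₂ σ₃ σ₄ : Equiv.Perm ℕ)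
    (hσ₁ : σ₁ = (List.range' 1 (n - 2)).formPerm)
    (hσ₂ : σ₂ = [n - 2, n - 1, n].formPerm)
    (hσ₃ : σ₃ = ((List.range (n / 2 - 2)).map
        (fun i => Equiv.swap (i + 1) (n - (i + 1) - 2))).prod * Equiv.swap (n - 2) n)
    (hσ₄ : σ₄ = ((List.range (n / 2 - 1)).map
        (fun i => Equiv.swap (i + 1) (n - (i + 1) - 1))).prod * Equiv.swap (n - 1) n) :
    σ₁ * σ₂ * σ₃ * σ₄ = 1 := by
  obtain ⟨k, rfl⟩ : ∃ k, n = k + 2 := ⟨n - 2, by omega⟩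
  obtain ⟨m, hm⟩ := hne
  simp only [Nat.sub_right_comm (k + 2) _ 2, Nat.sub_right_comm (k + 2) _ 1,
    Nat.add_sub_cancel, show k + 2 - 1 = k + 1 by omega] at hσ₁ hσ₂ hσ₃ hσ₄
  rw [mul_assoc _ σ₃, hσ₁, hσ₂, hσ₃, hσ₄, List.formPerm_range'_one_mul_formPerm_triple (by omega),
    reflection_mul_swap_mul_reflection_mul_swap (by omega) (by omega) (by omega) (by omega),
    mul_inv_cancel]
end

section
/- With σ₁, σ₂, σ₃, σ₄ ∈ S_n as in the Nielsen representative a_{n/2-1} (σ₁ = (1,...,n-2), σ₂ = (n-2,n-1,n), σ₃ = [∏_{i=1}^{n/2-2}(i,n-i-2)](n-2,n), σ₄ = [∏_{i=1}^{n/2-1}(i,n-i-1)](n-1,n)), the following real-descent relations hold with τ = Id: σ₄σ₁⁻¹σ₄⁻¹ = σ₁, σ₄⁻¹ = σ₄, σ₃⁻¹ = σ₃, and σ₃⁻¹σ₂⁻¹σ₃ = σ₂. -/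
private lemma formPerm_map_conj {α : Type*} [DecidableEq α] (σ : Equiv.Perm α) :
    ∀ l : List α, (l.map σ).formPerm = σ * l.formPerm * σ⁻¹
  | [] => by simp
  | [x] => by simp
  | x :: y :: l => by
    have ih := formPerm_map_conj σ (y :: l)
    simp only [List.map_cons] at ih ⊢
    rw [List.formPerm_cons_cons, List.formPerm_cons_cons, ih,
      Equiv.swap_apply_apply]
    group

private lemma swapProd_apply (m : ℕ) : ∀ (k : ℕ), 2 * k < m → ∀ x : ℕ,
    (((List.range k).map (fun i => Equiv.swap (i + 1) (m - (i + 1)))).prod : Equiv.Perm ℕ) x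
      = if (1 ≤ x ∧ x ≤ k) ∨ (m - k ≤ x ∧ x ≤ m - 1) then m - x else x := by
  intro k
  induction k with
  | zero =>
    intro h x
    rw [List.range_zero, List.map_nil, List.prod_nil, if_neg (by omega)]
    rfl
  | succ k ih =>
    intro h x
    rw [List.range_succ, List.map_append, List.prod_append, List.map_singleton,
      List.prod_singleton, Equiv.Perm.mul_apply, ih (by omega), Equiv.swap_apply_def]
    split_ifs <;> omega

theorem stmt_12 (n : ℕ) (hn : 6 ≤ n) (hne : Even n)
    (σ₁ σ₂ σ₃ σ₄ : Equiv.Perm ℕ)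
    (hσ₁ : σ₁ = (List.range' 1 (n - 2)).formPerm)
    (hσ₂ : σ₂ = [n - 2, n - 1, n].formPerm)
    (hσ₃ : σ₃ = ((List.range (n / 2 - 2)).map
        (fun i => Equiv.swap (i + 1) (n - (i + 1) - 2))).prod * Equiv.swap (n - 2) n)
    (hσ₄ : σ₄ = ((List.range (n / 2 - 1)).map
        (fun i => Equiv.swap (i + 1) (n - (i + 1) - 1))).prod * Equiv.swap (n - 1) n) :
    σ₄ * σ₁⁻¹ * σ₄⁻¹ = σ₁ ∧ σ₄⁻¹ = σ₄ ∧ σ₃⁻¹ = σ₃ ∧ σ₃⁻¹ * σ₂⁻¹ * σ₃ = σ₂ := by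
  have hpar : n % 2 = 0 := Nat.even_iff.mp hne
  -- rewrite the swap functions to match `swapProd_apply`
  have e4 : (fun i => Equiv.swap (i + 1) (n - (i + 1) - 1))
      = (fun i => Equiv.swap (i + 1) ((n - 1) - (i + 1))) := by
    funext i; congr 1; omega
  have e3 : (fun i => Equiv.swap (i + 1) (n - (i + 1) - 2))
      = (fun i => Equiv.swap (i + 1) ((n - 2) - (i + 1))) := by
    funext i; congr 1; omega
  rw [e4] at hσ₄
  rw [e3] at hσ₃
  -- pointwise formulas
  have h4 : ∀ x, σ₄ x = if 1 ≤ x ∧ x ≤ n - 2 then n - 1 - x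
      else if x = n - 1 then n else if x = n then n - 1 else x := by
    intro x
    rw [hσ₄, Equiv.Perm.mul_apply, swapProd_apply (n - 1) (n / 2 - 1) (by omega),
      Equiv.swap_apply_def]
    split_ifs <;> omega
  have h3 : ∀ x, σ₃ x = if 1 ≤ x ∧ x ≤ n - 3 then n - 2 - x
      else if x = n - 2 then n else if x = n then n - 2 else x := by
    intro x
    rw [hσ₃, Equiv.Perm.mul_apply, swapProd_apply (n - 2) (n / 2 - 2) (by omega),
      Equiv.swap_apply_def]
    split_ifs <;> omega
  -- involutions
  have hinv4 : σ₄⁻¹ = σ₄ := by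
    refine inv_eq_of_mul_eq_one_right ?_
    ext x
    rw [Equiv.Perm.mul_apply, h4, h4]
    simp only [Equiv.Perm.one_apply]
    split_ifs <;> omega
  have hinv3 : σ₃⁻¹ = σ₃ := by
    refine inv_eq_of_mul_eq_one_right ?_
    ext x
    rw [Equiv.Perm.mul_apply, h3, h3]
    simp only [Equiv.Perm.one_apply]
    split_ifs <;> omega
  -- conjugation of σ₁ by σ₄
  have hmap4 : (List.range' 1 (n - 2)).map σ₄ = (List.range' 1 (n - 2)).reverse := by
    apply List.ext_getElem
    · simp
    · intro i h1 h2
      simp only [List.length_map, List.length_range'] at h1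
      rw [List.getElem_map, List.getElem_reverse]
      simp only [List.getElem_range', List.length_range']
      rw [h4]
      split_ifs <;> omega
  have hc4 : σ₄ * σ₁ * σ₄⁻¹ = σ₁⁻¹ := by
    rw [hσ₁, ← formPerm_map_conj, hmap4, List.formPerm_reverse]
  have goal1 : σ₄ * σ₁⁻¹ * σ₄⁻¹ = σ₁ := by
    have : σ₄ * σ₁⁻¹ * σ₄⁻¹ = (σ₄ * σ₁ * σ₄⁻¹)⁻¹ := by group
    rw [this, hc4, inv_inv]
  -- conjugation of σ₂ by σ₃
  have v1 : σ₃ (n - 2) = n := by rw [h3]; split_ifs <;> omega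
  have v2 : σ₃ (n - 1) = n - 1 := by rw [h3]; split_ifs <;> omega
  have v3 : σ₃ n = n - 2 := by rw [h3]; split_ifs <;> omega
  have hmap3 : ([n - 2, n - 1, n]).map σ₃ = [n - 2, n - 1, n].reverse := by
    rw [show ([n - 2, n - 1, n] : List ℕ).reverse = [n, n - 1, n - 2] from rfl]
    simp [v1, v2, v3]
  have hc3 : σ₃ * σ₂ * σ₃⁻¹ = σ₂⁻¹ := by
    rw [hσ₂, ← formPerm_map_conj, hmap3, List.formPerm_reverse]
  have goal4 : σ₃⁻¹ * σ₂⁻¹ * σ₃ = σ₂ := by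
    rw [← hc3]; group
  exact ⟨goal1, hinv4, hinv3, goal4⟩
end
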